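/- Let $V$ be a real inner product space, $Z\in V$, and let $w, w_1, w_2$ be linear isometries of $V$ onto itself with $w_1(Z)=Z$ and $w_2(Z)=Z$. Let $\gamma_1,\ldots,\gamma_k \in V$ ($k\ge1$) be nonzero and pairwise orthogonal, and let $\beta\in V$ be nonzero with $\langle\beta,\gamma_j\rangle=0$ for $j=2,\ldots,k$. Assume $\langle\beta,\beta\rangle = 2\langle\gamma_1,\gamma_1\rangle$, $\langle\gamma_1,w(Z)\rangle>0$, and $0\le\langle\beta,w(Z)\rangle\le\langle\gamma_1,w(Z)\rangle$. Let $r_\gamma$ denote the orthogonal reflection $r_\gamma(v)=v-\frac{2\langle \gamma,v\rangle}{\langle\gamma,\gamma\rangle}\gamma$. Then $\langle Z,\ (w^{-1}\circ r_\beta\circ r_{\gamma_2}\circ\cdots\circ r_{\gamma_k}\circ w)(Z)\rangle - \langle Z,\ (w_1\circ w^{-1}\circ r_{\gamma_1}\circ r_{\gamma_2}\circ\cdots\circ r_{\gamma_k}\circ w\circ w_2)(Z)\rangle = \frac{2\langle\gamma_1,w(Z)\rangle^2}{\langle\gamma_1,\gamma_1\rangle} - \frac{2\langle\beta,w(Z)\rangle^2}{\langle\beta,\beta\rangle}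 > 0$; in particular $w^{-1}\circ r_\beta\circ r_{\gamma_2}\circ\cdots\circ r_{\gamma_k}\circ w \ne w_ 1\circ w^{-1}\circ r_{\gamma_1}\circ\cdots\circ r_{\gamma_k}\circ w\circ w_2$. (Statement (2.4) in the proof of Lemma 2.4.) -/

import Mathlib

open scoped RealInnerProductSpace

noncomputable section

variable {V : Type*} [NormedAddCommGroup V] [InnerProductSpace ℝ V]

/-- The orthogonal reflection in the hyperplane orthogonal to `γ`:
`r_γ(v) = v - (2⟨γ,v⟩/⟨γ,γ⟩) γ`. -/
def reflect (γ : V) (v : V) : V := v - (2 * ⟪γ, v⟫ / ⟪γ, γ⟫) • γ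

/-- The composition `r_{l₁} ∘ r_{l₂} ∘ ⋯ ∘ r_{lₙ}` of the reflections in the
entries of a list `l = [l₁, …, lₙ]` (the identity for the empty list). -/
def compReflect (l : List V) : V → V := l.foldr (fun γ f => reflect γ ∘ f) id

/-!
Conjugating by `w` moves the computation to `u = w Z`, and `w₁, w₂` drop out because they
are isometries fixing `Z`. Both maps apply `r_{γ₂} ⋯ r_{γₖ}` to `u`; the resulting vector `v`
pairs with `β` and with `γ₁` exactly as `u` does, since these are orthogonal to `γ₂, …, γₖ`.
Hence `⟨u, r_a v⟩ = ⟨u, v⟩ - 2⟨a, u⟩² / ⟨a, a⟩` for `a = β, γ₁`, which gives the identity.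
Positivity follows from `⟨β, u⟩² ≤ ⟨γ₁, u⟩²` and `⟨β, β⟩ = 2⟨γ₁, γ₁⟩`.
-/

lemma List.ofFn_eq_cons_tail {α : Type*} {k : ℕ} (hk : 0 < k) (γ : Fin k → α) :
    List.ofFn γ = γ ⟨0, hk⟩ :: (List.ofFn γ).tail := by
  cases k with
  | zero => exact absurd hk (lt_irrefl 0)
  | succ m => rw [List.ofFn_succ, List.tail_cons]; rfl

lemma List.exists_pos_of_mem_tail_ofFn {α : Type*} {k : ℕ} {γ : Fin k → α} {x : α}
    (hx : x ∈ (List.ofFn γ).tail) : ∃ i : Fin k, 0 < (i : ℕ) ∧ γ i = x := by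
  cases k with
  | zero => simp at hx
  | succ m =>
    rw [List.ofFn_succ, List.tail_cons, List.mem_ofFn] at hx
    obtain ⟨i, rfl⟩ := hx
    exact ⟨i.succ, i.succ_pos, rfl⟩

lemma LinearIsometryEquiv.inner_symm_apply (w : V ≃ₗᵢ[ℝ] V) (x y : V) :
    ⟪x, w.symm y⟫ = ⟪w x, y⟫ :=
  (w.inner_map_eq_flip x y).symm

lemma LinearIsometryEquiv.inner_apply_of_apply_eq_self {w : V ≃ₗᵢ[ℝ] V} {x : V}
    (hx : w x = x) (y : V) : ⟪x, w y⟫ = ⟪x, y⟫ := by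
  conv_lhs => rw [← hx]
  exact w.inner_map_map x y

lemma inner_reflect (δ a v : V) :
    ⟪δ, reflect a v⟫ = ⟪δ, v⟫ - (2 * ⟪a, v⟫ / ⟪a, a⟫) * ⟪δ, a⟫ := by
  simp only [reflect, inner_sub_right, real_inner_smul_right]

lemma inner_reflect_of_inner_eq {a u v : V} (h : ⟪a, v⟫ = ⟪a, u⟫) :
    ⟪u, reflect a v⟫ = ⟪u, v⟫ - 2 * ⟪a, u⟫ ^ 2 / ⟪a, a⟫ := by
  rw [inner_reflect, h, real_inner_comm u a]
  ring

lemma compReflect_cons (a : V) (l : List V) :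
    compReflect (a :: l) = reflect a ∘ compReflect l := rfl

lemma inner_compReflect_of_forall_inner_eq_zero {δ : V} {l : List V}
    (h : ∀ x ∈ l, ⟪δ, x⟫ = 0) (u : V) : ⟪δ, compReflect l u⟫ = ⟪δ, u⟫ := by
  induction l with
  | nil => rfl
  | cons a l ih =>
    rw [compReflect_cons, Function.comp_apply, inner_reflect, h a List.mem_cons_self,
      ih fun x hx => h x (List.mem_cons_of_mem a hx), mul_zero, sub_zero]

lemma two_mul_sq_div_sub_two_mul_sq_div_two_mul_pos {c g b : ℝ} (hc : 0 < c) (hg : 0 < g)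
    (hb : 0 ≤ b) (hbg : b ≤ g) : 0 < 2 * g ^ 2 / c - 2 * b ^ 2 / (2 * c) := by
  have hsq : b ^ 2 ≤ g ^ 2 := pow_le_pow_left₀ hb hbg 2
  rw [mul_div_mul_left _ _ two_ne_zero, ← sub_div]
  exact div_pos (by nlinarith) hc

theorem stmt_16_general (Z : V) (w w1 w2 : V ≃ₗᵢ[ℝ] V) (hw1 : w1 Z = Z) (hw2 : w2 Z = Z)
    (k : ℕ) (hk : 0 < k) (γ : Fin k → V) (β : V)
    (hne : ∀ i, γ i ≠ 0)
    (horth : ∀ i j, i ≠ j → ⟪γ i, γ j⟫ = 0)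
    (hβorth : ∀ i : Fin k, 0 < (i : ℕ) → ⟪β, γ i⟫ = 0)
    (hββ : ⟪β, β⟫ = 2 * ⟪γ ⟨0, hk⟩, γ ⟨0, hk⟩⟫)
    (hγ1 : 0 < ⟪γ ⟨0, hk⟩, w Z⟫)
    (hβ1 : 0 ≤ ⟪β, w Z⟫) (hβ2 : ⟪β, w Z⟫ ≤ ⟪γ ⟨0, hk⟩, w Z⟫) :
    (⟪Z, (⇑w.symm ∘ reflect β ∘ compReflect (List.ofFn γ).tail ∘ ⇑w) Z⟫
        - ⟪Z, (⇑w1 ∘ ⇑w.symm ∘ compReflect (List.ofFn γ) ∘ ⇑w ∘ ⇑w2) Z⟫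
      = 2 * ⟪γ ⟨0, hk⟩, w Z⟫ ^ 2 / ⟪γ ⟨0, hk⟩, γ ⟨0, hk⟩⟫
        - 2 * ⟪β, w Z⟫ ^ 2 / ⟪β, β⟫) ∧
    (0 < 2 * ⟪γ ⟨0, hk⟩, w Z⟫ ^ 2 / ⟪γ ⟨0, hk⟩, γ ⟨0, hk⟩⟫
        - 2 * ⟪β, w Z⟫ ^ 2 / ⟪β, β⟫) ∧
    (⇑w.symm ∘ reflect β ∘ compReflect (List.ofFn γ).tail ∘ ⇑w
      ≠ ⇑w1 ∘ ⇑w.symm ∘ compReflect (List.ofFn γ) ∘ ⇑w ∘ ⇑w2) := by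
  set v := compReflect (List.ofFn γ).tail (w Z)
  have hβv : ⟪β, v⟫ = ⟪β, w Z⟫ := by
    refine inner_compReflect_of_forall_inner_eq_zero (fun x hx => ?_) _
    obtain ⟨i, hi, rfl⟩ := List.exists_pos_of_mem_tail_ofFn hx
    exact hβorth i hi
  have hγv : ⟪γ ⟨0, hk⟩, v⟫ = ⟪γ ⟨0, hk⟩, w Z⟫ := by
    refine inner_compReflect_of_forall_inner_eq_zero (fun x hx => ?_) _
    obtain ⟨i, hi, rfl⟩ := List.exists_pos_of_mem_tail_ofFn hx
    exact horth _ i (Fin.ne_of_val_ne hi.ne)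
  have hleft : ⟪Z, (⇑w.symm ∘ reflect β ∘ compReflect (List.ofFn γ).tail ∘ ⇑w) Z⟫
      = ⟪w Z, v⟫ - 2 * ⟪β, w Z⟫ ^ 2 / ⟪β, β⟫ := by
    simp only [Function.comp_apply, w.inner_symm_apply]
    exact inner_reflect_of_inner_eq hβv
  have hright : ⟪Z, (⇑w1 ∘ ⇑w.symm ∘ compReflect (List.ofFn γ) ∘ ⇑w ∘ ⇑w2) Z⟫
      = ⟪w Z, v⟫ - 2 * ⟪γ ⟨0, hk⟩, w Z⟫ ^ 2 / ⟪γ ⟨0, hk⟩, γ ⟨0, hk⟩⟫ := by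
    simp only [Function.comp_apply, hw2, w1.inner_apply_of_apply_eq_self hw1,
      w.inner_symm_apply]
    rw [List.ofFn_eq_cons_tail hk, compReflect_cons, Function.comp_apply,
      inner_reflect_of_inner_eq hγv]
  have hpos := two_mul_sq_div_sub_two_mul_sq_div_two_mul_pos
    (real_inner_self_pos.2 (hne ⟨0, hk⟩)) hγ1 hβ1 hβ2
  rw [← hββ] at hpos
  have hdiff := (congrArg₂ HSub.hSub hleft hright).trans (sub_sub_sub_cancel_left _ _ _)
  refine ⟨hdiff, hpos, fun h => ?_⟩
  rw [h, sub_self] at hdiff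
  exact hpos.ne hdiff

/-- Statement (2.4) in the proof of Lemma 2.4: with isometries `w, w₁, w₂` fixing
`Z` (for `w₁, w₂`), nonzero pairwise orthogonal `γ₁, …, γₖ`, and a nonzero `β`
orthogonal to `γ₂, …, γₖ` with `⟨β,β⟩ = 2⟨γ₁,γ₁⟩`, `⟨γ₁,wZ⟩ > 0` and
`0 ≤ ⟨β,wZ⟩ ≤ ⟨γ₁,wZ⟩`, one has
`⟨Z, w⁻¹r_β r_{γ₂}⋯r_{γₖ}w Z⟩ - ⟨Z, w₁w⁻¹r_{γ₁}⋯r_{γₖ}ww₂ Z⟩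
  = 2⟨γ₁,wZ⟩²/⟨γ₁,γ₁⟩ - 2⟨β,wZ⟩²/⟨β,β⟩ > 0`;
in particular the two maps are distinct. -/
theorem stmt_16 (Z : V) (w w1 w2 : V ≃ₗᵢ[ℝ] V) (hw1 : w1 Z = Z) (hw2 : w2 Z = Z)
    (k : ℕ) (hk : 0 < k) (γ : Fin k → V) (β : V)
    (hne : ∀ i, γ i ≠ 0) (hβne : β ≠ 0)
    (horth : ∀ i j, i ≠ j → ⟪γ i, γ j⟫ = 0)
    (hβorth : ∀ i : Fin k, 0 < (i : ℕ) → ⟪β, γ i⟫ = 0)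
    (hββ : ⟪β, β⟫ = 2 * ⟪γ ⟨0, hk⟩, γ ⟨0, hk⟩⟫)
    (hγ1 : 0 < ⟪γ ⟨0, hk⟩, w Z⟫)
    (hβ1 : 0 ≤ ⟪β, w Z⟫) (hβ2 : ⟪β, w Z⟫ ≤ ⟪γ ⟨0, hk⟩, w Z⟫) :
    (⟪Z, (⇑w.symm ∘ reflect β ∘ compReflect (List.ofFn γ).tail ∘ ⇑w) Z⟫
        - ⟪Z, (⇑w1 ∘ ⇑w.symm ∘ compReflect (List.ofFn γ) ∘ ⇑w ∘ ⇑w2) Z⟫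
      = 2 * ⟪γ ⟨0, hk⟩, w Z⟫ ^ 2 / ⟪γ ⟨0, hk⟩, γ ⟨0, hk⟩⟫
        - 2 * ⟪β, w Z⟫ ^ 2 / ⟪β, β⟫) ∧
    (0 < 2 * ⟪γ ⟨0, hk⟩, w Z⟫ ^ 2 / ⟪γ ⟨0, hk⟩, γ ⟨0, hk⟩⟫
        - 2 * ⟪β, w Z⟫ ^ 2 / ⟪β, β⟫) ∧
    (⇑w.symm ∘ reflect β ∘ compReflect (List.ofFn γ).tail ∘ ⇑w
      ≠ ⇑w1 ∘ ⇑w.symm ∘ compReflect (List.ofFn γ) ∘ ⇑w ∘ ⇑w2) :=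
  stmt_16_general Z w w1 w2 hw1 hw2 k hk γ β hne horth hβorth hββ hγ1 hβ1 hβ2
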